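/- arXiv:2311.11338 — 3 statements merged into one kernel-verified Lean document; each statement's English description precedes it below -/
import Mathlib

section
/- Let (F,μ) be an RDS of continuous maps on a compact metric space (M,D). If (F,μ) is synchronizing, i.e. for every x,y ∈ M and μ^ℕ-almost every i ∈ F^ℕ one has D(X_n^x(i), X_n^y(i)) → 0 as n → ∞, then there is at most one μ-stationary Borel probability measure on M; that is, any two μ-stationary probability measures ν₁ and ν₂ are equal. -/
open MeasureTheory Topology Filter

noncomputable section

/-- `rdsIter i n` is the composition `i (n-1) ∘ ⋯ ∘ i 0`, i.e. the random orbit map `f_i^n`. -/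
def rdsIter {M : Type*} [TopologicalSpace M] (i : ℕ → C(M, M)) : ℕ → M → M
  | 0, x => x
  | n + 1, x => i n (rdsIter i n x)

/-- `P` is the infinite product of copies of `μ` (the measure `μ^ℕ`). -/
def IsProductMeasure {Ω : Type*} [MeasurableSpace Ω] (μ : Measure Ω)
    (P : Measure (ℕ → Ω)) : Prop :=
  IsProbabilityMeasure P ∧
    ∀ (n : ℕ) (s : Fin n → Set Ω), (∀ k, MeasurableSet (s k)) →
      P {ω | ∀ k : Fin n, ω (k : ℕ) ∈ s k} = ∏ k : Fin n, μ (s k)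

/-- The topological support of a measure. -/
def measSupp {Ω : Type*} [TopologicalSpace Ω] [MeasurableSpace Ω] (μ : Measure Ω) : Set Ω :=
  {f | ∀ U : Set Ω, IsOpen U → f ∈ U → 0 < μ U}

/-- Property (P): proximality (of `F = supp μ`). -/
def PropP {M : Type*} [MetricSpace M] [CompactSpace M] [MeasurableSpace C(M, M)]
    (μ : Measure C(M, M)) : Prop :=
  ∀ x y : M, ∃ i : ℕ → C(M, M), (∀ n, i n ∈ measSupp μ) ∧
    ∃ φ : ℕ → ℕ, StrictMono φ ∧
      Tendsto (fun k => dist (rdsIter i (φ k) x) (rdsIter i (φ k) y)) atTop (𝓝 0)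

/-- Property (LC): local contraction with rate `q`. -/
def PropLC {M : Type*} [MetricSpace M] [CompactSpace M] [MeasurableSpace C(M, M)]
    (P : Measure (ℕ → C(M, M))) (q : ℝ) : Prop :=
  ∀ x : M, ∀ᵐ i ∂P, ∃ B ∈ 𝓝 x, ∀ n : ℕ, Metric.diam (rdsIter i n '' B) ≤ q ^ n

/-- `ν` is a `μ`-stationary measure. -/
def IsRDSStationary {M : Type*} [MetricSpace M] [CompactSpace M] [MeasurableSpace M]
    [MeasurableSpace C(M, M)] (μ : Measure C(M, M)) (ν : Measure M) : Prop :=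
  ∀ A : Set M, MeasurableSet A → ν A = ∫⁻ f, ν (⇑f ⁻¹' A) ∂μ

/-! If `x` has law `ν` and is independent of `i ∼ μ^ℕ`, stationarity makes `X_n^x(i)` again
`ν`-distributed for every `n`. Sampling `x ∼ ν₁`, `y ∼ ν₂` and `i ∼ μ^ℕ` independently thus
couples `ν₁` and `ν₂` through `(X_n^x, X_n^y)` for every `n`; synchronization makes the two
coordinates merge, so by dominated convergence every bounded Lipschitz function has the same
integral against `ν₁` and `ν₂`. -/

theorem MeasureTheory.ext_of_forall_lipschitz_integral_eq {E : Type*} [PseudoMetricSpace E]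
    [MeasurableSpace E] [BorelSpace E] {ν₁ ν₂ : Measure E}
    [IsProbabilityMeasure ν₁] [IsProbabilityMeasure ν₂]
    (h : ∀ f : E → ℝ, (∃ C, ∀ x y, dist (f x) (f y) ≤ C) → (∃ L, LipschitzWith L f) →
      ∫ x, f x ∂ν₁ = ∫ x, f x ∂ν₂) :
    ν₁ = ν₂ := by
  have hlim : Tendsto (β := ProbabilityMeasure E) (fun _ : ℕ => ⟨ν₁, ‹_›⟩) atTop
      (𝓝 ⟨ν₂, ‹_›⟩) :=
    tendsto_iff_forall_lipschitz_integral_tendsto.2 fun f hb hL => by simp [h f hb hL]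
  exact congrArg Subtype.val
    (tendsto_nhds_unique (X := ProbabilityMeasure E) tendsto_const_nhds hlim)

theorem MeasureTheory.eq_of_forall_map_eq_of_ae_tendsto_dist {Ω E : Type*} [MeasurableSpace Ω]
    [PseudoMetricSpace E] [MeasurableSpace E] [BorelSpace E] {Q : Measure Ω}
    [IsProbabilityMeasure Q] {ν₁ ν₂ : Measure E} {X Y : ℕ → Ω → E}
    (hX : ∀ n, Measurable (X n)) (hY : ∀ n, Measurable (Y n))
    (hXν : ∀ n, Q.map (X n) = ν₁) (hYν : ∀ n, Q.map (Y n) = ν₂)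
    (hXY : ∀ᵐ ω ∂Q, Tendsto (fun n => dist (X n ω) (Y n ω)) atTop (𝓝 0)) :
    ν₁ = ν₂ := by
  have : IsProbabilityMeasure ν₁ := hXν 0 ▸ Measure.isProbabilityMeasure_map (hX 0).aemeasurable
  have : IsProbabilityMeasure ν₂ := hYν 0 ▸ Measure.isProbabilityMeasure_map (hY 0).aemeasurable
  refine ext_of_forall_lipschitz_integral_eq fun f ⟨C, hC⟩ ⟨L, hL⟩ => ?_
  let fb := BoundedContinuousFunction.mkOfBound ⟨f, hL.continuous⟩ C hC
  have hf_int : ∀ Z : Ω → E, Measurable Z → Integrable (fun ω => f (Z ω)) Q := fun Z hZ =>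
    Integrable.of_bound (hL.continuous.measurable.comp hZ).aestronglyMeasurable ‖fb‖
      (ae_of_all _ fun ω => fb.norm_coe_le_norm (Z ω))
  have hdiff : ∀ n, ∫ ω, f (X n ω) - f (Y n ω) ∂Q = ∫ x, f x ∂ν₁ - ∫ x, f x ∂ν₂ := fun n => by
    rw [integral_sub (hf_int _ (hX n)) (hf_int _ (hY n)), ← hXν n, ← hYν n,
      integral_map (hX n).aemeasurable hL.continuous.aestronglyMeasurable,
      integral_map (hY n).aemeasurable hL.continuous.aestronglyMeasurable]
  have hlim :
      Tendsto (fun n => ∫ ω, f (X n ω) - f (Y n ω) ∂Q) atTop (𝓝 (∫ _, (0 : ℝ) ∂Q)) := by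
    refine tendsto_integral_of_dominated_convergence (fun _ => C)
      (fun n => ((hf_int _ (hX n)).sub (hf_int _ (hY n))).aestronglyMeasurable)
      (integrable_const C) (fun n => ae_of_all _ fun ω => ?_) ?_
    · simpa [← Real.dist_eq] using hC (X n ω) (Y n ω)
    · filter_upwards [hXY] with ω hω
      refine squeeze_zero_norm (fun n => ?_) (by simpa using hω.const_mul (L : ℝ))
      simpa [← Real.dist_eq] using hL.dist_le_mul (X n ω) (Y n ω)
  simp only [hdiff, integral_zero] at hlim
  exact sub_eq_zero.1 (tendsto_nhds_unique tendsto_const_nhds hlim)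

theorem IsProductMeasure.map_restrict {Ω : Type*} [MeasurableSpace Ω] {μ : Measure Ω}
    [SigmaFinite μ] {P : Measure (ℕ → Ω)} (hP : IsProductMeasure μ P) (n : ℕ) :
    P.map (fun i (k : Fin n) => i k) = Measure.pi fun _ => μ := by
  have hres : Measurable fun (i : ℕ → Ω) (k : Fin n) => i k :=
    measurable_pi_lambda _ fun k => measurable_pi_apply _
  refine (Measure.pi_eq fun s hs => ?_).symm
  rw [Measure.map_apply hres (MeasurableSet.univ_pi hs), ← hP.2 n s hs]
  congr 1 with i
  simp

/-- `rdsIter` on finite words, the domain of `Measure.pi`. -/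
def rdsIterFin {M : Type*} [TopologicalSpace M] : (n : ℕ) → (Fin n → C(M, M)) → M → M
  | 0, _, x => x
  | n + 1, j, x => j (Fin.last n) (rdsIterFin n (Fin.init j) x)

section Iterates

variable {M : Type*} [TopologicalSpace M]

theorem rdsIterFin_snoc (n : ℕ) (j : Fin n → C(M, M)) (f : C(M, M)) (x : M) :
    rdsIterFin (n + 1) (Fin.snoc j f) x = f (rdsIterFin n j x) := by
  simp [rdsIterFin, Fin.init_snoc]

theorem rdsIter_eq_rdsIterFin (i : ℕ → C(M, M)) (n : ℕ) (x : M) :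
    rdsIter i n x = rdsIterFin n (fun k => i k) x := by
  induction n with
  | zero => rfl
  | succ n ih => rw [rdsIter, ih]; rfl

variable [LocallyCompactPair M M]

theorem continuous_rdsIterFin (n : ℕ) :
    Continuous fun p : (Fin n → C(M, M)) × M => rdsIterFin n p.1 p.2 := by
  induction n with
  | zero => exact continuous_snd
  | succ n ih =>
    have hinit : Continuous fun p : (Fin (n + 1) → C(M, M)) × M => (Fin.init p.1, p.2) := by
      fun_prop
    exact continuous_eval.comp (((continuous_apply _).comp continuous_fst).prodMk (ih.comp hinit))

theorem continuous_rdsIter (n : ℕ) :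
    Continuous fun p : (ℕ → C(M, M)) × M => rdsIter p.1 n p.2 := by
  have hres : Continuous fun p : (ℕ → C(M, M)) × M => (fun k : Fin n => p.1 k, p.2) := by
    fun_prop
  simp only [rdsIter_eq_rdsIterFin]
  exact (continuous_rdsIterFin n).comp hres

end Iterates

section Stationary

variable {M : Type*} [MetricSpace M] [CompactSpace M] [MeasurableSpace M] [BorelSpace M]
  [MeasurableSpace C(M, M)] [BorelSpace C(M, M)] {μ : Measure C(M, M)} {ν : Measure M}

theorem measurable_eval_continuousMap : Measurable fun p : C(M, M) × M => p.1 p.2 :=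
  continuous_eval.measurable

theorem IsRDSStationary.map_eval [SFinite ν] (h : IsRDSStationary μ ν) :
    (μ.prod ν).map (fun p : C(M, M) × M => p.1 p.2) = ν := by
  ext A hA
  rw [Measure.map_apply measurable_eval_continuousMap hA,
    Measure.prod_apply (measurable_eval_continuousMap hA)]
  exact (h A hA).symm

theorem IsRDSStationary.map_comp_of_map_eq [SFinite μ] [SFinite ν] (h : IsRDSStationary μ ν)
    {Ω : Type*} [MeasurableSpace Ω] {κ : Measure Ω} [SFinite κ] {F : Ω × M → M}
    (hF : Measurable F) (hκ : (κ.prod ν).map F = ν) :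
    ((μ.prod κ).prod ν).map (fun q => q.1.1 (F (q.1.2, q.2))) = ν := by
  calc ((μ.prod κ).prod ν).map (fun q => q.1.1 (F (q.1.2, q.2)))
      = (((μ.prod κ).prod ν).map MeasurableEquiv.prodAssoc).map
          ((fun p : C(M, M) × M => p.1 p.2) ∘ Prod.map id F) := by
        rw [Measure.map_map (measurable_eval_continuousMap.comp (measurable_id.prodMap hF))
          MeasurableEquiv.prodAssoc.measurable]
        rfl
    _ = ((μ.prod (κ.prod ν)).map (Prod.map id F)).map (fun p : C(M, M) × M => p.1 p.2) := by
        rw [Measure.prodAssoc_prod, Measure.map_map measurable_eval_continuousMap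
          (measurable_id.prodMap hF)]
    _ = ν := by
        rw [← Measure.map_prod_map _ _ measurable_id hF, Measure.map_id, hκ, h.map_eval]

theorem IsRDSStationary.map_rdsIterFin [SigmaFinite μ] [SFinite ν] (h : IsRDSStationary μ ν)
    (n : ℕ) :
    ((Measure.pi fun _ : Fin n => μ).prod ν).map (fun p => rdsIterFin n p.1 p.2) = ν := by
  induction n with
  | zero => simp [rdsIterFin]
  | succ n ih =>
    set e := MeasurableEquiv.piFinSuccAbove (fun _ : Fin (n + 1) => C(M, M)) (Fin.last n)
    have he : ∀ p, e.symm p = Fin.snoc p.2 p.1 := fun p => Fin.insertNth_last' _ _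
    have hpi :
        Measure.pi (fun _ : Fin (n + 1) => μ) = (μ.prod (Measure.pi fun _ => μ)).map e.symm :=
      ((measurePreserving_piFinSuccAbove (fun _ => μ) (Fin.last n)).symm e).map_eq.symm
    have hF := (continuous_rdsIterFin (M := M) (n + 1)).measurable
    calc ((Measure.pi fun _ => μ).prod ν).map (fun p => rdsIterFin (n + 1) p.1 p.2)
        = (((μ.prod (Measure.pi fun _ => μ)).prod ν).map (Prod.map e.symm id)).map
            (fun p => rdsIterFin (n + 1) p.1 p.2) := by
          rw [hpi, ← Measure.map_prod_map _ _ e.symm.measurable measurable_id, Measure.map_id]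
      _ = ((μ.prod (Measure.pi fun _ => μ)).prod ν).map
            (fun q => q.1.1 (rdsIterFin n q.1.2 q.2)) := by
          rw [Measure.map_map hF (e.symm.measurable.prodMap measurable_id)]
          congr with q
          simp [he, rdsIterFin_snoc]
      _ = ν := h.map_comp_of_map_eq (continuous_rdsIterFin n).measurable ih

theorem IsRDSStationary.map_rdsIter [SigmaFinite μ] (h : IsRDSStationary μ ν)
    {P : Measure (ℕ → C(M, M))} (hP : IsProductMeasure μ P) {Ω : Type*} [MeasurableSpace Ω]
    {ρ : Measure Ω} [SFinite ρ] {π : Ω → M} (hπ : Measurable π) (hρ : ρ.map π = ν) (n : ℕ) :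
    (P.prod ρ).map (fun q => rdsIter q.1 n (π q.2)) = ν := by
  subst hρ
  have : IsProbabilityMeasure P := hP.1
  have hres : Measurable fun (i : ℕ → C(M, M)) (k : Fin n) => i k :=
    measurable_pi_lambda _ fun k => measurable_pi_apply _
  simp only [rdsIter_eq_rdsIterFin]
  calc (P.prod ρ).map (fun q => rdsIterFin n (fun k => q.1 k) (π q.2))
      = ((P.prod ρ).map (Prod.map (fun i (k : Fin n) => i k) π)).map
          (fun p => rdsIterFin n p.1 p.2) :=
        (Measure.map_map (continuous_rdsIterFin n).measurable (hres.prodMap hπ)).symm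
    _ = ρ.map π := by
      rw [← Measure.map_prod_map _ _ hres hπ, hP.map_restrict, h.map_rdsIterFin]

end Stationary

theorem stmt1 {M : Type*} [MetricSpace M] [CompactSpace M]
    [MeasurableSpace M] [BorelSpace M]
    [MeasurableSpace C(M, M)] [BorelSpace C(M, M)]
    (μ : Measure C(M, M)) [IsProbabilityMeasure μ]
    (P : Measure (ℕ → C(M, M))) (hP : IsProductMeasure μ P)
    (hsync : ∀ x y : M, ∀ᵐ i ∂P,
        Tendsto (fun n => dist (rdsIter i n x) (rdsIter i n y)) atTop (𝓝 0))
    (ν₁ ν₂ : Measure M)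
    (hν₁ : IsProbabilityMeasure ν₁) (hsta₁ : IsRDSStationary μ ν₁)
    (hν₂ : IsProbabilityMeasure ν₂) (hsta₂ : IsRDSStationary μ ν₂) :
    ν₁ = ν₂ := by
  have : IsProbabilityMeasure P := hP.1
  set X : ℕ → (ℕ → C(M, M)) × (M × M) → M := fun n q => rdsIter q.1 n q.2.1
  set Y : ℕ → (ℕ → C(M, M)) × (M × M) → M := fun n q => rdsIter q.1 n q.2.2
  have hX : ∀ n, Measurable (X n) := fun n =>
    (continuous_rdsIter n).measurable.comp (measurable_id.prodMap measurable_fst)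
  have hY : ∀ n, Measurable (Y n) := fun n =>
    (continuous_rdsIter n).measurable.comp (measurable_id.prodMap measurable_snd)
  have hS : MeasurableSet {q | Tendsto (fun n => dist (X n q) (Y n q)) atTop (𝓝 0)} :=
    measurableSet_tendsto _ fun n => (hX n).dist (hY n)
  have hsync' : ∀ᵐ q ∂P.prod (ν₁.prod ν₂), Tendsto (fun n => dist (X n q) (Y n q)) atTop (𝓝 0) :=
    (Measure.ae_prod_iff_ae_ae hS).2
      ((Measure.ae_ae_comm hS).2 (ae_of_all _ fun xy => hsync xy.1 xy.2))
  exact eq_of_forall_map_eq_of_ae_tendsto_dist hX hY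
    (fun n => hsta₁.map_rdsIter hP measurable_fst (by simp) n)
    (fun n => hsta₂.map_rdsIter hP measurable_snd (by simp) n) hsync'
end
end

section
/- Let (F,μ) be an RDS of continuous maps on a compact metric space (M,D) satisfying property (LC) with rate q ∈ (0,1). Then for every δ ∈ (0,1) and every z ∈ M there exists a neighborhood B of z such that μ^ℕ({ i ∈ F^ℕ : diam_D(f_i^n(B)) ≤ q^n for all n ∈ ℕ }) ≥ δ. -/
open MeasureTheory Topology Filter

noncomputable section

/-- `ν` is a `μ`-stationary measure. -/
def IsStationaryRDS {M : Type*} [MetricSpace M] [CompactSpace M] [MeasurableSpace M]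
    [MeasurableSpace C(M, M)] (μ : Measure C(M, M)) (ν : Measure M) : Prop :=
  ∀ A : Set M, MeasurableSet A → ν A = ∫⁻ f, ν (⇑f ⁻¹' A) ∂μ

/-!
Write `E_k` for the event that the ball of radius `1/(k+1)` around `z` is contracted at rate `q`
along the whole orbit. The events `E_k` increase with `k`, and by (LC) almost every sequence lies
in some `E_k`, since every neighbourhood of `z` contains one of these balls. Continuity of the
probability measure from below then gives `μ^ℕ(E_k) → 1`, so `μ^ℕ(E_k) ≥ δ` for large `k`.
-/

theorem Monotone.exists_lt_measure_of_ae_mem_iUnion {α : Type*} [MeasurableSpace α]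
    {P : Measure α} [IsProbabilityMeasure P] {A : ℕ → Set α} (hA : Monotone A)
    (hae : ∀ᵐ x ∂P, x ∈ ⋃ k, A k) {c : ENNReal} (hc : c < 1) : ∃ k, c < P (A k) := by
  have hfull : P (⋃ k, A k) = 1 :=
    (measure_congr (eventuallyEq_univ.2 hae)).trans measure_univ
  rw [← hfull, hA.measure_iUnion] at hc
  exact lt_iSup_iff.1 hc

section Contraction

variable {M : Type*} [PseudoMetricSpace M]

def contractingSeqs (q : ℝ) (B : Set M) : Set (ℕ → C(M, M)) :=
  {i | ∀ n : ℕ, Metric.diam (rdsIter i n '' B) ≤ q ^ n}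

theorem contractingSeqs_anti [BoundedSpace M] {q : ℝ} {B B' : Set M} (h : B ⊆ B') :
    contractingSeqs q B' ⊆ contractingSeqs q B := fun _ hi n =>
  (Metric.diam_mono (Set.image_mono h) (Bornology.IsBounded.all _)).trans (hi n)

theorem monotone_contractingSeqs_ball [BoundedSpace M] (q : ℝ) (z : M) :
    Monotone fun k : ℕ => contractingSeqs q (Metric.ball z (1 / (k + 1))) := fun _ _ hkl =>
  contractingSeqs_anti (Metric.ball_subset_ball (Nat.one_div_le_one_div hkl))

end Contraction

theorem PropLC.ae_mem_iUnion_contractingSeqs_ball {M : Type*} [MetricSpace M] [CompactSpace M]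
    [MeasurableSpace C(M, M)] {P : Measure (ℕ → C(M, M))} {q : ℝ} (hLC : PropLC P q) (z : M) :
    ∀ᵐ i ∂P, i ∈ ⋃ k : ℕ, contractingSeqs q (Metric.ball z (1 / (k + 1))) := by
  filter_upwards [hLC z] with i ⟨B, hB, hcontr⟩
  obtain ⟨k, -, hball⟩ := Metric.nhds_basis_ball_inv_nat_succ.mem_iff.1 hB
  exact Set.mem_iUnion.2 ⟨k, contractingSeqs_anti hball hcontr⟩

theorem stmt3_general {M : Type*} [MetricSpace M] [CompactSpace M]
    [MeasurableSpace C(M, M)]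
    (μ : Measure C(M, M))
    (P : Measure (ℕ → C(M, M))) (hP : IsProductMeasure μ P)
    (q : ℝ)
    (hLC : PropLC P q) :
    ∀ δ ∈ Set.Ioo (0 : ℝ) 1, ∀ z : M, ∃ B ∈ 𝓝 z,
      ENNReal.ofReal δ ≤
        P {i : ℕ → C(M, M) | ∀ n : ℕ, Metric.diam (rdsIter i n '' B) ≤ q ^ n} := by
  intro δ hδ z
  have : IsProbabilityMeasure P := hP.1
  obtain ⟨k, hk⟩ := (monotone_contractingSeqs_ball q z).exists_lt_measure_of_ae_mem_iUnion
    (hLC.ae_mem_iUnion_contractingSeqs_ball z) (ENNReal.ofReal_lt_one.2 hδ.2)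
  exact ⟨_, Metric.ball_mem_nhds z Nat.one_div_pos_of_nat, hk.le⟩

theorem stmt3 {M : Type*} [MetricSpace M] [CompactSpace M]
    [MeasurableSpace M] [BorelSpace M]
    [MeasurableSpace C(M, M)] [BorelSpace C(M, M)]
    (μ : Measure C(M, M)) [IsProbabilityMeasure μ]
    (P : Measure (ℕ → C(M, M))) (hP : IsProductMeasure μ P)
    (q : ℝ) (hq : q ∈ Set.Ioo (0 : ℝ) 1)
    (hLC : PropLC P q) :
    ∀ δ ∈ Set.Ioo (0 : ℝ) 1, ∀ z : M, ∃ B ∈ 𝓝 z,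
      ENNReal.ofReal δ ≤
        P {i : ℕ → C(M, M) | ∀ n : ℕ, Metric.diam (rdsIter i n '' B) ≤ q ^ n} :=
  stmt3_general μ P hP q hLC
end
end

section
/- Let (F,μ) be an RDS of continuous maps on a compact metric space (M,D) satisfying properties (P) and (LC), and let ν be the unique μ-stationary probability measure. Then for every continuous function φ : M → ℝ, lim_{n→∞} sup_{x ∈ M} | ∫ φ(X_n^x(i)) dμ^ℕ(i) − ∫ φ dν | = 0; equivalently, the distribution of X_n^x converges weakly to ν, uniformly in x. -/
open MeasureTheory Topology Filter

noncomputable section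

/-- `ν` is a `μ`-stationary measure. -/
def IsMuStationary {M : Type*} [MetricSpace M] [CompactSpace M] [MeasurableSpace M]
    [MeasurableSpace C(M, M)] (μ : Measure C(M, M)) (ν : Measure M) : Prop :=
  ∀ A : Set M, MeasurableSet A → ν A = ∫⁻ f, ν (⇑f ⁻¹' A) ∂μ

/-!
Couple two orbits `X_n^u`, `X_n^v` driven by the same random maps. By compactness, (LC) gives
`δ > 0` such that `δ`-close pairs stay contracted at rate `q` forever with probability `≥ 1 - ε`,
and (P) gives `N` and `r > 0` such that every pair comes `δ`-close within `N` steps with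
probability `≥ r`. Since `μ^ℕ` is i.i.d., the Markov property at the blocks of `N + 1` steps and at
the first hitting time shows `dist (X_n^u) (X_n^v) → 0` in probability, uniformly in `u, v`.
So `x ↦ E φ(X_n^x)` has oscillation tending to `0`, while its `ν`-mean is `∫ φ dν` by stationarity.
-/

open ProbabilityTheory
open scoped ENNReal

local notation:max μ "^ℕ" => Measure.infinitePi fun (_ : ℕ) => μ

namespace RandomDynamicalSystem

section Sequences

variable {α : Type*} [MeasurableSpace α]

def shiftSeq (m : ℕ) (i : ℕ → α) : ℕ → α := fun k => i (m + k)

-- A set or function depends only on the first `m` terms iff it is invariant under `truncSeq m a`.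
def truncSeq (m : ℕ) (a : α) (i : ℕ → α) : ℕ → α := fun k => if k < m then i k else a

@[fun_prop]
lemma measurable_shiftSeq (m : ℕ) : Measurable (shiftSeq (α := α) m) :=
  measurable_pi_lambda _ fun k => measurable_pi_apply (m + k)

@[fun_prop]
lemma measurable_truncSeq (m : ℕ) (a : α) : Measurable (truncSeq m a) := by
  refine measurable_pi_lambda _ fun k => ?_
  by_cases hk : k < m
  · simpa only [truncSeq, hk, if_true] using measurable_pi_apply k
  · simpa only [truncSeq, hk, if_false] using measurable_const

lemma _root_.IsProductMeasure.eq_infinitePi {μ : Measure α} [IsProbabilityMeasure μ]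
    {P : Measure (ℕ → α)} (hP : IsProductMeasure μ P) : P = μ^ℕ := by
  classical
  refine Measure.eq_infinitePi _ fun s t ht => ?_
  obtain ⟨n, hsn⟩ := Finset.exists_nat_subset_range s
  have hbox := hP.2 n (fun k => if (k : ℕ) ∈ s then t k else Set.univ)
    fun k => by split_ifs <;> simp [ht]
  convert hbox using 1
  · congr 1
    ext ω
    simp only [Set.mem_pi, Finset.mem_coe, Set.mem_ofPred_eq]
    refine ⟨fun h k => ?_, fun h k hk => ?_⟩
    · split_ifs with hk
      exacts [h k hk, Set.mem_univ _]
    · simpa [hk] using h ⟨k, Finset.mem_range.1 (hsn hk)⟩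
  · rw [Fin.prod_univ_eq_prod_range (fun k => μ (if k ∈ s then t k else Set.univ)) n]
    simp only [apply_ite μ, measure_univ]
    rw [Finset.prod_ite_mem, Finset.inter_eq_right.2 hsn]

variable (μ : Measure α) [IsProbabilityMeasure μ]

lemma map_shiftSeq_infinitePi (m : ℕ) : (μ^ℕ).map (shiftSeq m) = μ^ℕ :=
  Measure.map_infinitePi_infinitePi_of_inj (add_right_injective m)

lemma indepFun_truncSeq_shiftSeq (m : ℕ) (a : α) : truncSeq m a ⟂ᵢ[μ^ℕ] shiftSeq m := by
  have hcoord := iIndepFun_infinitePi (P := fun _ : ℕ => μ) (X := fun _ => id)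
    fun _ => measurable_id
  have hblocks := indep_iSup_of_disjoint (fun k => (measurable_pi_apply k).comap_le) hcoord
    (Set.Iio_disjoint_Ici (le_refl m))
  rw [IndepFun_iff_Indep]
  refine indep_of_indep_of_le hblocks ?_ ?_
  · refine Measurable.comap_le (@measurable_pi_iff _ _ _ (_) _ _ |>.2 fun k => ?_)
    by_cases hk : k < m
    · simp only [truncSeq, hk, if_true]
      exact (comap_measurable (fun i : ℕ → α => i k)).mono (le_iSup₂_of_le k hk le_rfl) le_rfl
    · simp only [truncSeq, hk, if_false]
      exact measurable_const
  · exact Measurable.comap_le (@measurable_pi_iff _ _ _ (_) _ _ |>.2 fun k =>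
      (comap_measurable (fun i : ℕ → α => i (m + k))).mono
        (le_iSup₂_of_le (m + k) (Nat.le_add_right m k) le_rfl) le_rfl)

lemma map_truncSeq_shiftSeq (m : ℕ) (a : α) :
    (μ^ℕ).map (fun i => (truncSeq m a i, shiftSeq m i)) = ((μ^ℕ).map (truncSeq m a)).prod μ^ℕ := by
  rw [(indepFun_truncSeq_shiftSeq μ m a).map_prod_eq_prod_map_map
    (measurable_truncSeq m a).aemeasurable (measurable_shiftSeq m).aemeasurable,
    map_shiftSeq_infinitePi]

/-- Markov property at time `m`: `hAm` and `hXm` say that `A` and `X` only depend on the first `m`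
terms, which are independent of `shiftSeq m i`. -/
theorem measure_setOf_mem_and_shiftSeq_mem_le {β : Type*} [MeasurableSpace β] (m : ℕ) (a : α)
    {A : Set (ℕ → α)} (hA : MeasurableSet A) (hAm : truncSeq m a ⁻¹' A = A)
    {X : (ℕ → α) → β} (hX : Measurable X) (hXm : ∀ i, X (truncSeq m a i) = X i)
    {S : β → Set (ℕ → α)} (hS : MeasurableSet {p : β × (ℕ → α) | p.2 ∈ S p.1})
    {c : ℝ≥0∞} (hc : ∀ i ∈ A, μ^ℕ (S (X i)) ≤ c) :
    μ^ℕ {i | i ∈ A ∧ shiftSeq m i ∈ S (X i)} ≤ c * μ^ℕ A := by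
  set T : Set ((ℕ → α) × (ℕ → α)) := {p | p.1 ∈ A ∧ p.2 ∈ S (X p.1)}
  have hT : MeasurableSet T := (measurable_fst hA).inter
    (((hX.comp measurable_fst).prodMk measurable_snd) hS)
  have hpre : {i | i ∈ A ∧ shiftSeq m i ∈ S (X i)}
      = (fun i => (truncSeq m a i, shiftSeq m i)) ⁻¹' T := by
    ext i
    simp only [T, Set.mem_ofPred_eq, Set.mem_preimage, hXm]
    rw [← Set.mem_preimage (f := truncSeq m a), hAm]
  have hsection : ∀ w, μ^ℕ (Prod.mk w ⁻¹' T) ≤ A.indicator (fun _ => c) w := by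
    intro w
    by_cases hw : w ∈ A
    · simpa [T, hw] using hc w hw
    · simp [T, hw]
  rw [hpre, ← Measure.map_apply (by fun_prop) hT, map_truncSeq_shiftSeq, Measure.prod_apply hT]
  calc ∫⁻ w, μ^ℕ (Prod.mk w ⁻¹' T) ∂(μ^ℕ).map (truncSeq m a)
      ≤ ∫⁻ w, A.indicator (fun _ => c) w ∂(μ^ℕ).map (truncSeq m a) := lintegral_mono hsection
    _ = c * μ^ℕ A := by
      rw [lintegral_indicator_const hA, Measure.map_apply (measurable_truncSeq m a) hA, hAm]

lemma infinitePi_pos_of_mem_nhds [TopologicalSpace α] [OpensMeasurableSpace α] {w : ℕ → α}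
    (hw : ∀ k, w k ∈ measSupp μ) {W : Set (ℕ → α)} (hW : W ∈ 𝓝 w) : 0 < μ^ℕ W := by
  rw [nhds_pi, Filter.mem_pi'] at hW
  obtain ⟨I, t, ht, hIt⟩ := hW
  refine lt_of_lt_of_le ?_ (measure_mono ((Set.pi_mono fun k _ => interior_subset).trans hIt))
  rw [Measure.infinitePi_pi _ fun k _ => isOpen_interior.measurableSet, pos_iff_ne_zero,
    Finset.prod_ne_zero_iff]
  exact fun k _ => (hw k _ isOpen_interior (mem_interior_iff_mem_nhds.2 (ht k))).ne'

end Sequences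

section Orbits

variable {M : Type*} [TopologicalSpace M]

@[fun_prop]
lemma _root_.Continuous.rdsIter [LocallyCompactPair M M] {X : Type*} [TopologicalSpace X]
    {f : X → ℕ → C(M, M)} {g : X → M} (hf : Continuous f) (hg : Continuous g) (n : ℕ) :
    Continuous fun x => rdsIter (f x) n (g x) := by
  induction n with
  | zero => exact hg
  | succ n ih => exact ((continuous_apply n).comp hf).eval ih

lemma rdsIter_add (i : ℕ → C(M, M)) (m t : ℕ) (x : M) :
    rdsIter i (m + t) x = rdsIter (shiftSeq m i) t (rdsIter i m x) := by
  induction t with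
  | zero => rfl
  | succ t ih => exact congrArg (i (m + t)) ih

lemma rdsIter_succ' (i : ℕ → C(M, M)) (n : ℕ) (x : M) :
    rdsIter i (n + 1) x = rdsIter (shiftSeq 1 i) n (i 0 x) := by
  rw [Nat.add_comm, rdsIter_add]
  rfl

lemma rdsIter_truncSeq {i : ℕ → C(M, M)} {m n : ℕ} (hnm : n ≤ m) :
    rdsIter (truncSeq m (ContinuousMap.id M) i) n = rdsIter i n := by
  induction n with
  | zero => rfl
  | succ n ih =>
    funext x
    simp only [rdsIter, ih (Nat.le_of_succ_le hnm), truncSeq, if_pos (Nat.lt_of_succ_le hnm)]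

end Orbits

section Stationary

variable {M : Type*} [MetricSpace M] [CompactSpace M] [MeasurableSpace M] [BorelSpace M]
  [MeasurableSpace C(M, M)] [BorelSpace C(M, M)]
  {μ : Measure C(M, M)} [IsProbabilityMeasure μ] {ν : Measure M} [IsProbabilityMeasure ν]

lemma _root_.IsMuStationary.lintegral_measure_setOf_apply_mem (hsta : IsMuStationary μ ν) {t : Set M}
    (ht : MeasurableSet t) : ∫⁻ x, μ {f | f x ∈ t} ∂ν = ν t := by
  have hS : MeasurableSet {p : M × C(M, M) | p.2 p.1 ∈ t} :=
    (continuous_snd.eval continuous_fst).measurable ht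
  calc ∫⁻ x, μ {f | f x ∈ t} ∂ν = ν.prod μ {p | p.2 p.1 ∈ t} := (Measure.prod_apply hS).symm
    _ = ∫⁻ f, ν (f ⁻¹' t) ∂μ := Measure.prod_apply_symm hS
    _ = ν t := (hsta t ht).symm

lemma _root_.IsMuStationary.map_shiftSeq_prod (hsta : IsMuStationary μ ν) :
    ((μ^ℕ).prod ν).map (fun p => (shiftSeq 1 p.1, p.1 0 p.2)) = (μ^ℕ).prod ν := by
  have hind : shiftSeq 1 ⟂ᵢ[μ^ℕ] fun i : ℕ → C(M, M) => i 0 :=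
    ((indepFun_truncSeq_shiftSeq μ 1 (ContinuousMap.id M)).comp
      (measurable_pi_apply 0) measurable_id).symm
  have hΦ : Measurable fun p : (ℕ → C(M, M)) × M => (shiftSeq 1 p.1, p.1 0 p.2) :=
    ((measurable_shiftSeq 1).comp measurable_fst).prodMk
      (((continuous_apply 0).comp continuous_fst).eval continuous_snd).measurable
  refine (Measure.prod_eq fun s t hs ht => ?_).symm
  have hfiber : ∀ x, μ^ℕ {i | shiftSeq 1 i ∈ s ∧ i 0 x ∈ t} = μ^ℕ s * μ {f | f x ∈ t} := by
    intro x
    have ht' : MeasurableSet {f : C(M, M) | f x ∈ t} := (continuous_eval_const x).measurable ht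
    calc μ^ℕ {i | shiftSeq 1 i ∈ s ∧ i 0 x ∈ t}
        = μ^ℕ (shiftSeq 1 ⁻¹' s) * μ^ℕ ((fun i => i 0) ⁻¹' {f | f x ∈ t}) :=
          hind.measure_inter_preimage_eq_mul _ _ hs ht'
      _ = μ^ℕ s * μ {f | f x ∈ t} := by
          rw [← Measure.map_apply (measurable_shiftSeq 1) hs, map_shiftSeq_infinitePi,
            ← Measure.map_apply (measurable_pi_apply 0) ht', Measure.infinitePi_map_eval]
  rw [Measure.map_apply hΦ (hs.prod ht), Measure.prod_apply_symm (hΦ (hs.prod ht))]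
  simp_rw [Set.preimage, Set.mem_prod, Set.mem_ofPred_eq, hfiber]
  rw [lintegral_const_mul' _ _ (measure_ne_top _ _), hsta.lintegral_measure_setOf_apply_mem ht]

lemma _root_.IsMuStationary.map_rdsIter (hsta : IsMuStationary μ ν) (n : ℕ) :
    ((μ^ℕ).prod ν).map (fun p => rdsIter p.1 n p.2) = ν := by
  induction n with
  | zero => simp [rdsIter, Measure.map_snd_prod]
  | succ n ih =>
    have hstep : (fun p : (ℕ → C(M, M)) × M => rdsIter p.1 (n + 1) p.2)
        = (fun p => rdsIter p.1 n p.2) ∘ fun p => (shiftSeq 1 p.1, p.1 0 p.2) := by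
      funext p
      exact rdsIter_succ' p.1 n p.2
    rw [hstep, ← Measure.map_map (by fun_prop) (by fun_prop), hsta.map_shiftSeq_prod, ih]

lemma integrable_comp_rdsIter (ρ : Measure ((ℕ → C(M, M)) × M)) [IsFiniteMeasure ρ]
    (φ : C(M, ℝ)) (n : ℕ) : Integrable (fun p => φ (rdsIter p.1 n p.2)) ρ :=
  Integrable.of_bound (by fun_prop : Continuous fun p : (ℕ → C(M, M)) × M =>
      φ (rdsIter p.1 n p.2)).aestronglyMeasurable ‖φ‖
    (Eventually.of_forall fun p => φ.norm_coe_le_norm _)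

lemma _root_.IsMuStationary.integral_integral_rdsIter (hsta : IsMuStationary μ ν) (φ : C(M, ℝ))
    (n : ℕ) : ∫ x, ∫ i, φ (rdsIter i n x) ∂μ^ℕ ∂ν = ∫ x, φ x ∂ν := by
  conv_rhs => rw [← hsta.map_rdsIter n]
  rw [integral_map (by fun_prop) φ.continuous.aestronglyMeasurable,
    integral_prod_symm _ (integrable_comp_rdsIter _ φ n)]

end Stationary

section Synchronization

variable {M : Type*} [MetricSpace M] [CompactSpace M] [MeasurableSpace C(M, M)] [BorelSpace C(M, M)]

lemma _root_.PropLC.exists_pos_measure_le {P : Measure (ℕ → C(M, M))} [IsFiniteMeasure P]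
    {q : ℝ} (hLC : PropLC P q) (x : M) {ε : ℝ≥0∞} (hε : 0 < ε) :
    ∃ ρ > 0, P (⋃ t : ℕ, ⋃ u ∈ Metric.ball x ρ, ⋃ v ∈ Metric.ball x ρ,
      {i | q ^ t < dist (rdsIter i t u) (rdsIter i t v)}) ≤ ε := by
  set E : ℕ → Set (ℕ → C(M, M)) := fun n => ⋃ t : ℕ, ⋃ u ∈ Metric.ball x (1 / (n + 1)),
    ⋃ v ∈ Metric.ball x (1 / (n + 1)), {i | q ^ t < dist (rdsIter i t u) (rdsIter i t v)}
  have hE : ∀ n, MeasurableSet (E n) := fun n => IsOpen.measurableSet <|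
    isOpen_iUnion fun t => isOpen_biUnion fun u _ => isOpen_biUnion fun v _ =>
      isOpen_lt continuous_const (by fun_prop)
  have hanti : Antitone E := by
    intro a b hab
    have hball := Metric.ball_subset_ball (x := x) (Nat.one_div_le_one_div hab)
    exact Set.iUnion_mono fun t => Set.biUnion_mono hball fun u _ =>
      Set.biUnion_mono hball fun v _ => subset_rfl
  have hnull : P (⋂ n, E n) = 0 := by
    refine measure_mono_null ?_ (ae_iff.1 (hLC x))
    intro i hi hgood
    obtain ⟨B, hB, hdiam⟩ := hgood
    obtain ⟨ρ', hρ', hball⟩ := Metric.mem_nhds_iff.1 hB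
    obtain ⟨n, hn⟩ := exists_nat_one_div_lt hρ'
    obtain ⟨t, u, hu, v, hv, hlt⟩ : ∃ t, ∃ u ∈ Metric.ball x (1 / (n + 1)),
        ∃ v ∈ Metric.ball x (1 / (n + 1)), q ^ t < dist (rdsIter i t u) (rdsIter i t v) := by
      simpa [E] using Set.mem_iInter.1 hi n
    have hmem : ∀ y ∈ Metric.ball x (1 / (n + 1)), rdsIter i t y ∈ rdsIter i t '' B :=
      fun y hy => Set.mem_image_of_mem _ (hball (Metric.ball_subset_ball hn.le hy))
    exact hlt.not_ge ((Metric.dist_le_diam_of_mem Metric.isBounded_of_compactSpace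
      (hmem u hu) (hmem v hv)).trans (hdiam t))
  have hlim := tendsto_measure_iInter_atTop (fun n => (hE n).nullMeasurableSet) hanti
    ⟨0, measure_ne_top P _⟩
  rw [hnull] at hlim
  obtain ⟨n, hn⟩ := (hlim.eventually (gt_mem_nhds hε)).exists
  exact ⟨1 / (n + 1), Nat.one_div_pos_of_nat, hn.le⟩

lemma _root_.PropLC.exists_pos_forall_dist_lt_measure_le {P : Measure (ℕ → C(M, M))}
    [IsFiniteMeasure P] {q : ℝ} (hLC : PropLC P q) {ε : ℝ≥0∞} (hε : 0 < ε) :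
    ∃ δ > 0, ∀ u v : M, dist u v < δ →
      P {i | ∃ t : ℕ, q ^ t < dist (rdsIter i t u) (rdsIter i t v)} ≤ ε := by
  choose ρ hρ hPρ using fun x => hLC.exists_pos_measure_le x hε
  obtain ⟨δ, hδ, hcover⟩ := lebesgue_number_lemma_of_metric isCompact_univ
    (fun x => Metric.isOpen_ball (x := x) (ε := ρ x))
    (fun x _ => Set.mem_iUnion.2 ⟨x, Metric.mem_ball_self (hρ x)⟩)
  refine ⟨δ, hδ, fun u v huv => ?_⟩
  obtain ⟨x, hx⟩ := hcover u (Set.mem_univ u)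
  refine (measure_mono fun i hi => ?_).trans (hPρ x)
  obtain ⟨t, ht⟩ := hi
  simp only [Set.mem_iUnion]
  exact ⟨t, u, hx (Metric.mem_ball_self hδ), v, hx (Metric.mem_ball'.2 huv), ht⟩

variable {μ : Measure C(M, M)} [IsProbabilityMeasure μ]

lemma _root_.PropP.eventually_nhds_le_measure (hProx : PropP μ) {δ : ℝ} (hδ : 0 < δ)
    (p : M × M) : ∃ N : ℕ, ∀ᶠ p' in 𝓝 p, ((N : ℝ≥0∞) + 1)⁻¹ ≤
      μ^ℕ {i | ∃ m ≤ N, dist (rdsIter i m p'.1) (rdsIter i m p'.2) < δ} := by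
  obtain ⟨w, hw, φ, -, hφ⟩ := hProx p.1 p.2
  obtain ⟨k, hk⟩ := (hφ.eventually (gt_mem_nhds hδ)).exists
  have hopen : IsOpen {z : (ℕ → C(M, M)) × (M × M) |
      dist (rdsIter z.1 (φ k) z.2.1) (rdsIter z.1 (φ k) z.2.2) < δ} :=
    isOpen_lt (by fun_prop) continuous_const
  obtain ⟨W, hW, V, hV, hWV⟩ := mem_nhds_prod_iff.1 (hopen.mem_nhds (x := (w, p)) hk)
  obtain ⟨n, hn⟩ := ENNReal.exists_inv_nat_lt (infinitePi_pos_of_mem_nhds μ hw hW).ne'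
  refine ⟨max (φ k) n, Filter.mem_of_superset hV fun p' hp' => ?_⟩
  calc (((max (φ k) n : ℕ) : ℝ≥0∞) + 1)⁻¹ ≤ (n : ℝ≥0∞)⁻¹ := by
        gcongr
        exact_mod_cast (le_max_right _ _).trans (Nat.le_succ _)
    _ ≤ μ^ℕ W := hn.le
    _ ≤ μ^ℕ {i | ∃ m ≤ max (φ k) n, dist (rdsIter i m p'.1) (rdsIter i m p'.2) < δ} :=
        measure_mono fun i hi => ⟨φ k, le_max_left _ _, hWV (Set.mk_mem_prod hi hp')⟩

lemma _root_.PropP.exists_forall_le_measure (hProx : PropP μ) {δ : ℝ} (hδ : 0 < δ) :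
    ∃ N : ℕ, ∃ r > 0, ∀ u v : M,
      r ≤ μ^ℕ {i | ∃ m ≤ N, dist (rdsIter i m u) (rdsIter i m v) < δ} := by
  set G : ℕ → Set (M × M) := fun N => {p | ((N : ℝ≥0∞) + 1)⁻¹ ≤
    μ^ℕ {i | ∃ m ≤ N, dist (rdsIter i m p.1) (rdsIter i m p.2) < δ}}
  have hmono : Monotone fun N => interior (G N) := by
    refine fun a b hab => interior_mono fun p hp => ?_
    calc ((b : ℝ≥0∞) + 1)⁻¹ ≤ ((a : ℝ≥0∞) + 1)⁻¹ := by gcongr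
      _ ≤ μ^ℕ {i | ∃ m ≤ a, dist (rdsIter i m p.1) (rdsIter i m p.2) < δ} := hp
      _ ≤ μ^ℕ {i | ∃ m ≤ b, dist (rdsIter i m p.1) (rdsIter i m p.2) < δ} :=
        measure_mono fun i ⟨m, hm, hlt⟩ => ⟨m, hm.trans hab, hlt⟩
  obtain ⟨N, hN⟩ := isCompact_univ.elim_directed_cover (fun N => interior (G N))
    (fun _ => isOpen_interior) (fun p _ => Set.mem_iUnion.2 <|
      (hProx.eventually_nhds_le_measure hδ p).imp fun _ => mem_interior_iff_mem_nhds.2)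
    hmono.directed_le
  exact ⟨N, ((N : ℝ≥0∞) + 1)⁻¹, by simp, fun u v =>
    interior_subset (s := G N) (hN (Set.mem_univ (u, v)))⟩

end Synchronization

section Coupling

variable {M : Type*} [MetricSpace M]

def noHitBefore (δ : ℝ) (u v : M) (K : ℕ) : Set (ℕ → C(M, M)) :=
  {i | ∀ m < K, δ ≤ dist (rdsIter i m u) (rdsIter i m v)}

def firstHitAt (δ : ℝ) (u v : M) (m : ℕ) : Set (ℕ → C(M, M)) :=
  {i | dist (rdsIter i m u) (rdsIter i m v) < δ ∧ i ∈ noHitBefore δ u v m}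

variable {δ : ℝ} {u v : M}

lemma truncSeq_preimage_noHitBefore {K L : ℕ} (hKL : K ≤ L) :
    truncSeq L (ContinuousMap.id M) ⁻¹' noHitBefore δ u v K = noHitBefore δ u v K :=
  Set.ext fun i => forall₂_congr fun m hm => by rw [rdsIter_truncSeq (hm.le.trans hKL)]

lemma truncSeq_preimage_firstHitAt (m : ℕ) :
    truncSeq m (ContinuousMap.id M) ⁻¹' firstHitAt δ u v m = firstHitAt δ u v m := by
  ext i
  simp only [firstHitAt, Set.mem_preimage, Set.mem_ofPred_eq, rdsIter_truncSeq le_rfl]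
  rw [← Set.mem_preimage (f := truncSeq m _), truncSeq_preimage_noHitBefore le_rfl]

lemma pairwiseDisjoint_firstHitAt (s : Set ℕ) : s.PairwiseDisjoint (firstHitAt δ u v) := by
  intro a _ b _ hab
  refine Set.disjoint_left.2 fun i hia hib => ?_
  rcases hab.lt_or_gt with h | h
  · exact (hib.2 a h).not_gt hia.1
  · exact (hia.2 b h).not_gt hib.1

lemma setOf_pow_lt_dist_subset {q : ℝ} (hq₀ : 0 ≤ q) (hq₁ : q ≤ 1) {K n₀ n : ℕ}
    (hn : K + n₀ ≤ n) :
    {i | q ^ n₀ < dist (rdsIter i n u) (rdsIter i n v)} ⊆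
      noHitBefore δ u v K ∪ ⋃ m ∈ Finset.range K, {i | i ∈ firstHitAt δ u v m ∧
        ∃ t : ℕ, q ^ t < dist (rdsIter i (m + t) u) (rdsIter i (m + t) v)} := by
  intro i hi
  by_cases hhit : ∃ m, m < K ∧ dist (rdsIter i m u) (rdsIter i m v) < δ
  · classical
    obtain ⟨hmK, hm⟩ := Nat.find_spec hhit
    have hfirst : i ∈ firstHitAt δ u v (Nat.find hhit) := ⟨hm, fun m' hm' =>
      not_lt.1 fun h => Nat.find_min hhit hm' ⟨hm'.trans hmK, h⟩⟩
    refine Or.inr (Set.mem_biUnion (Finset.mem_range.2 hmK) ⟨hfirst, n - Nat.find hhit, ?_⟩)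
    rw [Nat.add_sub_cancel' (by omega)]
    exact (pow_le_pow_of_le_one hq₀ hq₁ (by omega)).trans_lt hi
  · push Not at hhit
    exact Or.inl hhit

variable [CompactSpace M]

lemma isClosed_setOf_mem_noHitBefore (K : ℕ) :
    IsClosed {z : (M × M) × (ℕ → C(M, M)) | z.2 ∈ noHitBefore δ z.1.1 z.1.2 K} := by
  change IsClosed {z : (M × M) × (ℕ → C(M, M)) |
    ∀ m < K, δ ≤ dist (rdsIter z.2 m z.1.1) (rdsIter z.2 m z.1.2)}
  simp only [Set.ofPred_forall]
  exact isClosed_iInter fun m => isClosed_iInter fun _ => isClosed_le continuous_const (by fun_prop)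

variable [MeasurableSpace C(M, M)] [BorelSpace C(M, M)]

lemma measurableSet_noHitBefore (K : ℕ) : MeasurableSet (noHitBefore δ u v K) :=
  ((isClosed_setOf_mem_noHitBefore K).preimage
    (by fun_prop : Continuous fun i : ℕ → C(M, M) => ((u, v), i))).measurableSet

lemma measurableSet_firstHitAt (m : ℕ) : MeasurableSet (firstHitAt δ u v m) :=
  (isOpen_lt (f := fun i => dist (rdsIter i m u) (rdsIter i m v)) (by fun_prop)
    continuous_const).measurableSet.inter (measurableSet_noHitBefore m)

variable {μ : Measure C(M, M)} [IsProbabilityMeasure μ]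

lemma measure_noHitBefore_succ_le {N : ℕ} {r : ℝ≥0∞}
    (hr : r ≤ μ^ℕ {i | ∃ m ≤ N, dist (rdsIter i m u) (rdsIter i m v) < δ}) :
    μ^ℕ (noHitBefore δ u v (N + 1)) ≤ 1 - r := by
  have hcompl : noHitBefore δ u v (N + 1) =
      {i | ∃ m ≤ N, dist (rdsIter i m u) (rdsIter i m v) < δ}ᶜ := by
    ext i
    simp [noHitBefore]
  have hhit := (measurableSet_noHitBefore (δ := δ) (u := u) (v := v) (N + 1)).compl
  rw [hcompl, compl_compl] at hhit
  rw [hcompl, prob_compl_eq_one_sub hhit]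
  exact tsub_le_tsub_left hr 1

variable [MeasurableSpace M] [BorelSpace M]

/-- Markov property at the block boundaries `k * (N + 1)`. -/
theorem measure_noHitBefore_le {N : ℕ} {r : ℝ≥0∞}
    (hr : ∀ u v : M, r ≤ μ^ℕ {i | ∃ m ≤ N, dist (rdsIter i m u) (rdsIter i m v) < δ}) (k : ℕ) :
    μ^ℕ (noHitBefore δ u v (k * (N + 1))) ≤ (1 - r) ^ k := by
  induction k with
  | zero => simpa using prob_le_one
  | succ k ih =>
    set K := k * (N + 1)
    have hsplit : noHitBefore δ u v ((k + 1) * (N + 1)) ⊆ {i | i ∈ noHitBefore δ u v K ∧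
        shiftSeq K i ∈ noHitBefore δ (rdsIter i K u) (rdsIter i K v) (N + 1)} := by
      intro i hi
      refine ⟨fun m hm => hi m (by rw [Nat.succ_mul]; omega), fun m hm => ?_⟩
      rw [← rdsIter_add, ← rdsIter_add]
      exact hi (K + m) (by rw [Nat.succ_mul]; omega)
    calc μ^ℕ (noHitBefore δ u v ((k + 1) * (N + 1)))
        ≤ (1 - r) * μ^ℕ (noHitBefore δ u v K) :=
          (measure_mono hsplit).trans <| measure_setOf_mem_and_shiftSeq_mem_le μ K _
            (measurableSet_noHitBefore K) (truncSeq_preimage_noHitBefore le_rfl)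
            (X := fun i => (rdsIter i K u, rdsIter i K v))
            (S := fun p => noHitBefore δ p.1 p.2 (N + 1)) (by fun_prop)
            (fun i => by simp only [rdsIter_truncSeq le_rfl])
            (isClosed_setOf_mem_noHitBefore _).measurableSet
            (fun i _ => measure_noHitBefore_succ_le (hr _ _))
      _ ≤ (1 - r) * (1 - r) ^ k := by gcongr
      _ = (1 - r) ^ (k + 1) := (pow_succ' _ _).symm

theorem measure_firstHitAt_inter_le {q : ℝ} {ε : ℝ≥0∞}
    (hδ : ∀ u v : M, dist u v < δ →
      μ^ℕ {i | ∃ t : ℕ, q ^ t < dist (rdsIter i t u) (rdsIter i t v)} ≤ ε) (m : ℕ) :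
    μ^ℕ {i | i ∈ firstHitAt δ u v m ∧
      ∃ t : ℕ, q ^ t < dist (rdsIter i (m + t) u) (rdsIter i (m + t) v)} ≤
      ε * μ^ℕ (firstHitAt δ u v m) := by
  have hS : MeasurableSet {z : (M × M) × (ℕ → C(M, M)) |
      ∃ t : ℕ, q ^ t < dist (rdsIter z.2 t z.1.1) (rdsIter z.2 t z.1.2)} := by
    refine IsOpen.measurableSet ?_
    simp only [Set.ofPred_exists]
    exact isOpen_iUnion fun t => isOpen_lt continuous_const (by fun_prop)
  simp only [rdsIter_add]
  exact measure_setOf_mem_and_shiftSeq_mem_le μ m _ (measurableSet_firstHitAt m)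
    (truncSeq_preimage_firstHitAt m) (X := fun i => (rdsIter i m u, rdsIter i m v))
    (S := fun p => {j | ∃ t : ℕ, q ^ t < dist (rdsIter j t p.1) (rdsIter j t p.2)})
    (by fun_prop) (fun i => by simp only [rdsIter_truncSeq le_rfl]) hS (fun i hi => hδ _ _ hi.1)

theorem measure_pow_lt_dist_le {q : ℝ} {N : ℕ} {r ε : ℝ≥0∞} (hq₀ : 0 ≤ q) (hq₁ : q ≤ 1)
    (hr : ∀ u v : M, r ≤ μ^ℕ {i | ∃ m ≤ N, dist (rdsIter i m u) (rdsIter i m v) < δ})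
    (hδ : ∀ u v : M, dist u v < δ →
      μ^ℕ {i | ∃ t : ℕ, q ^ t < dist (rdsIter i t u) (rdsIter i t v)} ≤ ε)
    {k n₀ n : ℕ} (hn : k * (N + 1) + n₀ ≤ n) :
    μ^ℕ {i | q ^ n₀ < dist (rdsIter i n u) (rdsIter i n v)} ≤ (1 - r) ^ k + ε := by
  set K := k * (N + 1)
  calc μ^ℕ {i | q ^ n₀ < dist (rdsIter i n u) (rdsIter i n v)}
      ≤ μ^ℕ (noHitBefore δ u v K) + ∑ m ∈ Finset.range K, μ^ℕ {i | i ∈ firstHitAt δ u v m ∧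
          ∃ t : ℕ, q ^ t < dist (rdsIter i (m + t) u) (rdsIter i (m + t) v)} :=
        (measure_mono (setOf_pow_lt_dist_subset hq₀ hq₁ hn)).trans <|
          (measure_union_le _ _).trans <| add_le_add_right (measure_biUnion_finset_le _ _) _
    _ ≤ (1 - r) ^ k + ∑ m ∈ Finset.range K, ε * μ^ℕ (firstHitAt δ u v m) :=
        add_le_add (measure_noHitBefore_le hr k)
          (Finset.sum_le_sum fun m _ => measure_firstHitAt_inter_le hδ m)
    _ = (1 - r) ^ k + ε * μ^ℕ (⋃ m ∈ Finset.range K, firstHitAt δ u v m) := by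
        rw [← Finset.mul_sum, measure_biUnion_finset (pairwiseDisjoint_firstHitAt _)
          fun m _ => measurableSet_firstHitAt m]
    _ ≤ (1 - r) ^ k + ε * 1 := by gcongr; exact prob_le_one
    _ = (1 - r) ^ k + ε := by rw [mul_one]

theorem eventually_measure_le_dist_le {q : ℝ} (hq : q ∈ Set.Ioo (0 : ℝ) 1) (hProx : PropP μ)
    (hLC : PropLC μ^ℕ q) {η : ℝ} (hη : 0 < η) {ε : ℝ≥0∞} (hε : 0 < ε) :
    ∀ᶠ n in atTop, ∀ u v : M,
      μ^ℕ {i | η ≤ dist (rdsIter i n u) (rdsIter i n v)} ≤ ε := by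
  have hε₂ : 0 < ε / 2 := ENNReal.half_pos hε.ne'
  obtain ⟨δ, hδ, hLCδ⟩ := hLC.exists_pos_forall_dist_lt_measure_le hε₂
  obtain ⟨N, r, hr, hNr⟩ := hProx.exists_forall_le_measure hδ
  obtain ⟨k, hk⟩ := ((ENNReal.tendsto_pow_atTop_nhds_zero_of_lt_one
    (ENNReal.sub_lt_self ENNReal.one_ne_top one_ne_zero hr.ne')).eventually
      (gt_mem_nhds hε₂)).exists
  obtain ⟨n₀, hn₀⟩ := exists_pow_lt_of_lt_one hη hq.2
  filter_upwards [eventually_ge_atTop (k * (N + 1) + n₀)] with n hn u v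
  calc μ^ℕ {i | η ≤ dist (rdsIter i n u) (rdsIter i n v)}
      ≤ μ^ℕ {i | q ^ n₀ < dist (rdsIter i n u) (rdsIter i n v)} :=
        measure_mono fun i hi => hn₀.trans_le hi
    _ ≤ (1 - r) ^ k + ε / 2 := measure_pow_lt_dist_le hq.1.le hq.2.le hNr hLCδ hn
    _ ≤ ε / 2 + ε / 2 := by gcongr
    _ = ε := ENNReal.add_halves ε

end Coupling

section Expectations

lemma abs_integral_comp_sub_le {Ω M : Type*} [MeasurableSpace Ω] {P : Measure Ω}
    [IsProbabilityMeasure P] [MetricSpace M] [CompactSpace M] [MeasurableSpace M] [BorelSpace M]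
    {F G : Ω → M} (hF : Measurable F) (hG : Measurable G) (φ : C(M, ℝ)) {η ε : ℝ} (hε : 0 ≤ ε)
    (hφ : ∀ x y, dist x y < η → dist (φ x) (φ y) < ε) :
    |∫ ω, φ (F ω) ∂P - ∫ ω, φ (G ω) ∂P| ≤
      ε + 2 * ‖φ‖ * P.real {ω | η ≤ dist (F ω) (G ω)} := by
  set B := {ω | η ≤ dist (F ω) (G ω)}
  have hB : MeasurableSet B := measurableSet_le measurable_const (hF.dist hG)
  have hint : ∀ {H : Ω → M}, Measurable H → Integrable (fun ω => φ (H ω)) P := fun hH =>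
    Integrable.of_bound (φ.continuous.measurable.comp hH).aestronglyMeasurable ‖φ‖
      (Eventually.of_forall fun ω => φ.norm_coe_le_norm _)
  have hpoint : ∀ ω, |φ (F ω) - φ (G ω)| ≤ ε + B.indicator (fun _ => 2 * ‖φ‖) ω := by
    intro ω
    by_cases hω : ω ∈ B
    · rw [Set.indicator_of_mem hω]
      have hF' := φ.norm_coe_le_norm (F ω)
      have hG' := φ.norm_coe_le_norm (G ω)
      rw [Real.norm_eq_abs] at hF' hG'
      linarith [abs_sub (φ (F ω)) (φ (G ω))]
    · rw [Set.indicator_of_notMem hω, add_zero, ← Real.dist_eq]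
      exact (hφ _ _ (not_le.1 hω)).le
  calc |∫ ω, φ (F ω) ∂P - ∫ ω, φ (G ω) ∂P| = |∫ ω, (φ (F ω) - φ (G ω)) ∂P| := by
        rw [integral_sub (hint hF) (hint hG)]
    _ ≤ ∫ ω, |φ (F ω) - φ (G ω)| ∂P := abs_integral_le_integral_abs
    _ ≤ ∫ ω, (ε + B.indicator (fun _ => 2 * ‖φ‖) ω) ∂P :=
        integral_mono ((hint hF).sub (hint hG)).abs
          ((integrable_const ε).add ((integrable_const _).indicator hB)) hpoint
    _ = ε + 2 * ‖φ‖ * P.real B := by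
        rw [integral_add (integrable_const ε) ((integrable_const _).indicator hB),
          integral_indicator_const _ hB, integral_const, probReal_univ, smul_eq_mul, one_mul,
          smul_eq_mul, mul_comm]

variable {M : Type*} [MetricSpace M] [CompactSpace M] [MeasurableSpace M] [BorelSpace M]
  [MeasurableSpace C(M, M)] [BorelSpace C(M, M)]

lemma eventually_abs_integral_sub_le {P : Measure (ℕ → C(M, M))} [IsProbabilityMeasure P]
    (hsync : ∀ η > 0, ∀ ε > 0, ∀ᶠ n in atTop, ∀ u v : M,
      P {i | η ≤ dist (rdsIter i n u) (rdsIter i n v)} ≤ ε)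
    (φ : C(M, ℝ)) : ∀ ε > 0, ∀ᶠ n in atTop, ∀ u v : M,
      |∫ i, φ (rdsIter i n u) ∂P - ∫ i, φ (rdsIter i n v) ∂P| ≤ ε := by
  intro ε hε
  obtain ⟨η, hη, hφ⟩ := Metric.uniformContinuous_iff.1
    (CompactSpace.uniformContinuous_of_continuous φ.continuous) (ε / 2) (half_pos hε)
  set ε' := ε / (4 * (‖φ‖ + 1))
  have hε' : 0 < ε' := by positivity
  filter_upwards [hsync η hη (ENNReal.ofReal ε') (ENNReal.ofReal_pos.2 hε')] with n hn u v
  have hbad : P.real {i | η ≤ dist (rdsIter i n u) (rdsIter i n v)} ≤ ε' :=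
    ENNReal.toReal_le_of_le_ofReal hε'.le (hn u v)
  have hφε' : 2 * ‖φ‖ * ε' ≤ ε / 2 := by
    rw [show 2 * ‖φ‖ * ε' = ε / 2 * (‖φ‖ / (‖φ‖ + 1)) by simp only [ε']; field_simp; ring]
    exact mul_le_of_le_one_right (half_pos hε).le
      ((div_le_one (by positivity)).2 (by linarith))
  calc |∫ i, φ (rdsIter i n u) ∂P - ∫ i, φ (rdsIter i n v) ∂P|
      ≤ ε / 2 + 2 * ‖φ‖ * P.real {i | η ≤ dist (rdsIter i n u) (rdsIter i n v)} :=
        abs_integral_comp_sub_le (by fun_prop) (by fun_prop) φ (half_pos hε).le hφ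
    _ ≤ ε / 2 + 2 * ‖φ‖ * ε' := by gcongr
    _ ≤ ε := by linarith

end Expectations

lemma tendsto_iSup_abs_sub_of_integral_eq {X : Type*} [MeasurableSpace X] {ν : Measure X}
    [IsProbabilityMeasure ν] {g : ℕ → X → ℝ} {c : ℝ} (hg : ∀ n, Integrable (g n) ν)
    (hmean : ∀ n, ∫ x, g n x ∂ν = c)
    (hosc : ∀ ε > 0, ∀ᶠ n in atTop, ∀ x y, |g n x - g n y| ≤ ε) :
    Tendsto (fun n => ⨆ x, |g n x - c|) atTop (𝓝 0) := by
  refine Metric.tendsto_nhds.2 fun ε hε => ?_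
  filter_upwards [hosc (ε / 2) (half_pos hε)] with n hn
  have hpoint : ∀ x, |g n x - c| ≤ ε / 2 := by
    intro x
    have hsub : g n x - c = ∫ y, (g n x - g n y) ∂ν := by
      rw [integral_sub (integrable_const _) (hg n), integral_const, probReal_univ, one_smul,
        hmean]
    simpa [hsub] using norm_integral_le_of_norm_le_const (μ := ν)
      (Eventually.of_forall fun y => (Real.norm_eq_abs _).trans_le (hn x y))
  rw [Real.dist_eq, sub_zero, abs_of_nonneg (Real.iSup_nonneg fun x => abs_nonneg _)]
  exact (Real.iSup_le hpoint (half_pos hε).le).trans_lt (half_lt_self hε)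

end RandomDynamicalSystem

open RandomDynamicalSystem

theorem stmt6 {M : Type*} [MetricSpace M] [CompactSpace M]
    [MeasurableSpace M] [BorelSpace M]
    [MeasurableSpace C(M, M)] [BorelSpace C(M, M)]
    (μ : Measure C(M, M)) [IsProbabilityMeasure μ]
    (P : Measure (ℕ → C(M, M))) (hP : IsProductMeasure μ P)
    (q : ℝ) (hq : q ∈ Set.Ioo (0 : ℝ) 1)
    (hProx : PropP μ) (hLC : PropLC P q)
    (ν : Measure M) (hν : IsProbabilityMeasure ν) (hsta : IsMuStationary μ ν) :
    ∀ φ : C(M, ℝ),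
      Tendsto (fun n : ℕ =>
          ⨆ x : M, |(∫ i, φ (rdsIter i n x) ∂P) - ∫ z, φ z ∂ν|)
        atTop (𝓝 0) := by
  intro φ
  obtain rfl := hP.eq_infinitePi
  exact tendsto_iSup_abs_sub_of_integral_eq
    (fun n => (integrable_comp_rdsIter _ φ n).integral_prod_right)
    (hsta.integral_integral_rdsIter φ)
    (eventually_abs_integral_sub_le
      (fun _ hη _ hε => eventually_measure_le_dist_le hq hProx hLC hη hε) φ)
end
end
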